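/- For l < d < u, define p⁺ := (Erfi(d/√2) - Erfi(l/√2))/(Erfi(u/√2) - Erfi(l/√2)) and c̄ := p⁺·(u - l) - (d - l). Then c̄ > 0 for every u ∈ (d, -l) whenever l < d < 0 < -l. -/
import Mathlib

open Real intervalIntegral

noncomputable def Erfi (x : ℝ) : ℝ := (2 / Real.sqrt π) * ∫ t in (0 : ℝ)..x, Real.exp (t ^ 2)

private lemma g_cont : Continuous (fun t : ℝ => Real.exp (t ^ 2)) :=
  Real.continuous_exp.comp (continuous_pow 2)

private lemma g_intble (p q : ℝ) :
    IntervalIntegrable (fun t : ℝ => Real.exp (t ^ 2)) MeasureTheory.volume p q :=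
  g_cont.intervalIntegrable p q

private lemma int_le_const {p q K : ℝ} (hpq : p ≤ q)
    (h : ∀ t ∈ Set.Icc p q, Real.exp (t ^ 2) ≤ K) :
    (∫ t in p..q, Real.exp (t ^ 2)) ≤ K * (q - p) := by
  have := intervalIntegral.integral_mono_on hpq (g_intble p q)
    (_root_.intervalIntegrable_const (c := K)) h
  simpa [intervalIntegral.integral_const, smul_eq_mul, mul_comm] using this

private lemma const_le_int {p q K : ℝ} (hpq : p ≤ q)
    (h : ∀ t ∈ Set.Icc p q, K ≤ Real.exp (t ^ 2)) :
    K * (q - p) ≤ ∫ t in p..q, Real.exp (t ^ 2) := by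
  have := intervalIntegral.integral_mono_on hpq
    (_root_.intervalIntegrable_const (c := K)) (g_intble p q) h
  simpa [intervalIntegral.integral_const, smul_eq_mul, mul_comm] using this

private lemma int_lt_const {p q K : ℝ} (hpq : p < q)
    (h : ∀ t ∈ Set.Ioo p q, Real.exp (t ^ 2) < K) :
    (∫ t in p..q, Real.exp (t ^ 2)) < K * (q - p) := by
  have hpos : 0 < ∫ t in p..q, (K - Real.exp (t ^ 2)) := by
    refine intervalIntegral.intervalIntegral_pos_of_pos_on ?_ (fun x hx => sub_pos.2 (h x hx)) hpq
    exact (_root_.intervalIntegrable_const (c := K)).sub (g_intble p q)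
  rw [intervalIntegral.integral_sub (_root_.intervalIntegrable_const (c := K)) (g_intble p q),
    intervalIntegral.integral_const, smul_eq_mul] at hpos
  linarith

private lemma int_pos {p q : ℝ} (hpq : p < q) :
    0 < ∫ t in p..q, Real.exp (t ^ 2) :=
  intervalIntegral.intervalIntegral_pos_of_pos (g_intble p q) (fun _ => Real.exp_pos _) hpq

private lemma main_ineq {a b c : ℝ} (hab : a < b) (hb0 : b < 0) (hbc : b < c) (hca : c < -a) :
    (b - a) * ∫ t in b..c, Real.exp (t ^ 2) < (c - b) * ∫ t in a..b, Real.exp (t ^ 2) := by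
  have hIab : (b - a) * Real.exp (b ^ 2) ≤ ∫ t in a..b, Real.exp (t ^ 2) := by
    have := const_le_int (K := Real.exp (b ^ 2)) hab.le (fun t ht => by
      have h1 : t ≤ b := ht.2
      have : b ^ 2 ≤ t ^ 2 := by nlinarith
      exact Real.exp_le_exp.2 this)
    linarith [this]
  rcases le_or_gt c (-b) with hc | hc
  · -- case 1
    have h1 : (∫ t in b..c, Real.exp (t ^ 2)) < Real.exp (b ^ 2) * (c - b) := by
      refine int_lt_const hbc (fun t ht => Real.exp_lt_exp.2 ?_)
      have h2 : b < t := ht.1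
      have h3 : t < c := ht.2
      nlinarith
    have hcb : 0 < c - b := by linarith
    have hba : 0 < b - a := by linarith
    calc (b - a) * ∫ t in b..c, Real.exp (t ^ 2)
        < (b - a) * (Real.exp (b ^ 2) * (c - b)) := by
          exact (mul_lt_mul_iff_right₀ hba).2 h1
      _ = (c - b) * ((b - a) * Real.exp (b ^ 2)) := by ring
      _ ≤ (c - b) * ∫ t in a..b, Real.exp (t ^ 2) := by
          exact mul_le_mul_of_nonneg_left hIab hcb.le
  · -- case 2 : -b < c < -a ; set x = -c ∈ (a,b)
    set x := -c with hx
    have hax : a < x := by simp [hx]; linarith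
    have hxb : x < b := by simp [hx]; linarith
    -- split ∫_b^c = ∫_b^{-b} + ∫_{-b}^c
    have hsplit : (∫ t in b..c, Real.exp (t ^ 2)) =
        (∫ t in b..(-b), Real.exp (t ^ 2)) + ∫ t in (-b)..c, Real.exp (t ^ 2) :=
      (intervalIntegral.integral_add_adjacent_intervals (g_intble b (-b)) (g_intble (-b) c)).symm
    -- evenness: ∫_{-b}^c = ∫_x^b
    have heven : (∫ t in (-b)..c, Real.exp (t ^ 2)) = ∫ t in x..b, Real.exp (t ^ 2) := by
      have h1 : (∫ t in x..b, Real.exp ((-t) ^ 2)) = ∫ t in (-b)..(-x), Real.exp (t ^ 2) :=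
        intervalIntegral.integral_comp_neg (fun t => Real.exp (t ^ 2))
      have h2 : (∫ t in x..b, Real.exp ((-t) ^ 2)) = ∫ t in x..b, Real.exp (t ^ 2) := by
        apply intervalIntegral.integral_congr
        intro t _
        simp [neg_sq]
      rw [hx, neg_neg] at h1
      rw [← h1, h2]
    -- bound middle part
    have hmid : (∫ t in b..(-b), Real.exp (t ^ 2)) ≤ Real.exp (b ^ 2) * (-b - b) := by
      refine int_le_const (by linarith) (fun t ht => Real.exp_le_exp.2 ?_)
      have h1 : b ≤ t := ht.1
      have h2 : t ≤ -b := ht.2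
      nlinarith
    -- strict bound on ∫_x^b
    have hxbound : (∫ t in x..b, Real.exp (t ^ 2)) < Real.exp (x ^ 2) * (b - x) := by
      refine int_lt_const hxb (fun t ht => Real.exp_lt_exp.2 ?_)
      have h1 : x < t := ht.1
      have h2 : t < b := ht.2
      nlinarith
    have haxbound : Real.exp (x ^ 2) * (x - a) ≤ ∫ t in a..x, Real.exp (t ^ 2) := by
      have := const_le_int (K := Real.exp (x ^ 2)) hax.le (fun t ht => Real.exp_le_exp.2 (by
        have h1 : t ≤ x := ht.2
        have : x < 0 := by linarith
        nlinarith))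
      linarith
    have hsplit2 : (∫ t in a..b, Real.exp (t ^ 2)) =
        (∫ t in a..x, Real.exp (t ^ 2)) + ∫ t in x..b, Real.exp (t ^ 2) :=
      (intervalIntegral.integral_add_adjacent_intervals (g_intble a x) (g_intble x b)).symm
    -- key pieces
    have hIax : 0 < ∫ t in a..x, Real.exp (t ^ 2) := int_pos hax
    have hIxb : 0 < ∫ t in x..b, Real.exp (t ^ 2) := int_pos hxb
    have key1 : (x - a) * (∫ t in x..b, Real.exp (t ^ 2)) <
        (b - x) * ∫ t in a..x, Real.exp (t ^ 2) := by
      have h1 : (x - a) * (∫ t in x..b, Real.exp (t ^ 2)) <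
          (x - a) * (Real.exp (x ^ 2) * (b - x)) :=
        (mul_lt_mul_iff_right₀ (by linarith)).2 hxbound
      have h2 : (b - x) * (Real.exp (x ^ 2) * (x - a)) ≤
          (b - x) * ∫ t in a..x, Real.exp (t ^ 2) :=
        mul_le_mul_of_nonneg_left haxbound (by linarith)
      nlinarith [h1, h2]
    have key2 : (b - a) * (∫ t in b..(-b), Real.exp (t ^ 2)) ≤
        (-b - b) * ∫ t in a..b, Real.exp (t ^ 2) := by
      have h1 : (b - a) * (∫ t in b..(-b), Real.exp (t ^ 2)) ≤
          (b - a) * (Real.exp (b ^ 2) * (-b - b)) :=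
        mul_le_mul_of_nonneg_left hmid (by linarith)
      have h2 : (-b - b) * ((b - a) * Real.exp (b ^ 2)) ≤
          (-b - b) * ∫ t in a..b, Real.exp (t ^ 2) :=
        mul_le_mul_of_nonneg_left hIab (by linarith)
      nlinarith [h1, h2]
    -- combine: c - b = (-b - b) + (b - x)
    have hcb : c - b = (-b - b) + (b - x) := by simp [hx]; ring
    rw [hsplit, heven, hsplit2]
    rw [hsplit2] at key2
    nlinarith [key1, key2]

theorem cbar_pos (l d u : ℝ) (hld : l < d) (hd0 : d < 0) (hdu : d < u) (hul : u < -l)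
    (pp : ℝ)
    (hpp : pp = (Erfi (d / Real.sqrt 2) - Erfi (l / Real.sqrt 2)) /
        (Erfi (u / Real.sqrt 2) - Erfi (l / Real.sqrt 2))) :
    0 < pp * (u - l) - (d - l) := by
  set s := Real.sqrt 2 with hs
  have hspos : 0 < s := Real.sqrt_pos.2 (by norm_num)
  set a := l / s with ha
  set b := d / s with hb
  set c := u / s with hc
  have hab : a < b := by apply div_lt_div_of_pos_right hld hspos
  have hb0 : b < 0 := div_neg_of_neg_of_pos hd0 hspos
  have hbc : b < c := by apply div_lt_div_of_pos_right hdu hspos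
  have hca : c < -a := by
    rw [ha, ← neg_div]
    exact div_lt_div_of_pos_right hul hspos
  have hac : a < c := hab.trans hbc
  have hπ : 0 < 2 / Real.sqrt π := by positivity
  -- Erfi differences
  have hdiff : ∀ p q : ℝ, Erfi q - Erfi p = (2 / Real.sqrt π) * ∫ t in p..q, Real.exp (t ^ 2) := by
    intro p q
    rw [Erfi, Erfi, ← mul_sub]
    congr 1
    exact intervalIntegral.integral_interval_sub_left (g_intble 0 q) (g_intble 0 p)
  have hD : Erfi c - Erfi a = (2 / Real.sqrt π) * ∫ t in a..c, Real.exp (t ^ 2) := hdiff a c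
  have hN : Erfi b - Erfi a = (2 / Real.sqrt π) * ∫ t in a..b, Real.exp (t ^ 2) := hdiff a b
  have hDpos : 0 < Erfi c - Erfi a := by
    rw [hD]; exact mul_pos hπ (int_pos hac)
  -- main inequality in scaled variables
  have hmain := main_ineq hab hb0 hbc hca
  have hsplit : (∫ t in a..c, Real.exp (t ^ 2)) =
      (∫ t in a..b, Real.exp (t ^ 2)) + ∫ t in b..c, Real.exp (t ^ 2) :=
    (intervalIntegral.integral_add_adjacent_intervals (g_intble a b) (g_intble b c)).symm
  have hkey : (b - a) * (∫ t in a..c, Real.exp (t ^ 2)) <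
      (c - a) * ∫ t in a..b, Real.exp (t ^ 2) := by
    rw [hsplit]; nlinarith [hmain]
  -- translate to original variables
  have hul' : u - l = s * (c - a) := by
    rw [ha, hc]; field_simp
  have hdl : d - l = s * (b - a) := by
    rw [ha, hb]; field_simp
  rw [hpp]
  have hkey2 : (d - l) * (Erfi c - Erfi a) < (Erfi b - Erfi a) * (u - l) := by
    rw [hD, hN, hul', hdl]
    calc s * (b - a) * ((2 / Real.sqrt π) * ∫ t in a..c, Real.exp (t ^ 2))
        = (s * (2 / Real.sqrt π)) * ((b - a) * ∫ t in a..c, Real.exp (t ^ 2)) := by ring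
      _ < (s * (2 / Real.sqrt π)) * ((c - a) * ∫ t in a..b, Real.exp (t ^ 2)) := by
          exact (mul_lt_mul_iff_right₀ (by positivity)).2 hkey
      _ = 2 / Real.sqrt π * (∫ t in a..b, Real.exp (t ^ 2)) * (s * (c - a)) := by ring
  have : (d - l) < (Erfi b - Erfi a) / (Erfi c - Erfi a) * (u - l) := by
    rw [div_mul_eq_mul_div, lt_div_iff₀ hDpos]
    linarith [hkey2]
  linarith [this]
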